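/- There is exactly one α > 0 such that α³·Φ(α) = (1 − α²)·φ(α); moreover this unique solution lies in the interval (0.638, 0.639). -/

import Mathlib

open MeasureTheory

/-- Density of the standard normal distribution. -/
noncomputable def stdPdf (x : ℝ) : ℝ := (Real.sqrt (2 * Real.pi))⁻¹ * Real.exp (-x ^ 2 / 2)

/-- Cumulative distribution function of the standard normal distribution. -/
noncomputable def stdCdf (x : ℝ) : ℝ := ∫ u in Set.Iic x, stdPdf u

/-!
Put `g a = a³ Φ(a) - (1 - a²) φ(a)`. Since `φ' = -a φ`, `g' a = 3a (a Φ(a) + φ(a))`, which is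
positive for `a > 0`, so `g` has at most one positive zero. It changes sign on `[0.638, 0.639]`:
this is certified with `Φ(a) = 1/2 + ∫₀^a φ` and the alternating Taylor bounds for `e^{-t}`,
`t ≥ 0`, integrated termwise to bound `∫₀^a e^{-x²/2}`.
-/

open Real Set
open scoped Nat

lemma hasDerivAt_sum_range_neg_pow_div_factorial (n : ℕ) (x : ℝ) :
    HasDerivAt (fun t : ℝ ↦ ∑ k ∈ Finset.range (n + 1), (-t) ^ k / k !)
      (-∑ k ∈ Finset.range n, (-x) ^ k / k !) x := by
  simp_rw [Finset.sum_range_succ' _ n, pow_zero, ← Finset.sum_neg_distrib]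
  apply HasDerivAt.add_const
  refine HasDerivAt.fun_sum fun k _ ↦ ?_
  refine (((hasDerivAt_neg x).pow (k + 1)).div_const ((k + 1)! : ℝ)).congr_deriv ?_
  rw [Nat.factorial_succ]
  push_cast
  field_simp

lemma monotoneOn_Ici_of_hasDerivAt_nonneg {f f' : ℝ → ℝ} {a : ℝ}
    (hf : ∀ x, HasDerivAt f (f' x) x) (hf' : ∀ x, a < x → 0 ≤ f' x) : MonotoneOn f (Ici a) :=
  monotoneOn_of_hasDerivWithinAt_nonneg (convex_Ici a)
    (fun x _ ↦ (hf x).continuousAt.continuousWithinAt)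
    (fun x _ ↦ (hf x).hasDerivWithinAt) (fun x hx ↦ hf' x (by rwa [interior_Ici] at hx))

/-- The remainder `Rₙ₊₁(t)` vanishes at `0` and has derivative `-Rₙ(t)`. -/
theorem neg_one_pow_mul_exp_neg_sub_sum_nonneg (n : ℕ) {t : ℝ} (ht : 0 ≤ t) :
    0 ≤ (-1) ^ n * (exp (-t) - ∑ k ∈ Finset.range n, (-t) ^ k / k !) := by
  induction n generalizing t with
  | zero => simpa using (exp_pos _).le
  | succ n ih =>
    have hderiv (x : ℝ) : HasDerivAt
        (fun t ↦ (-1) ^ (n + 1) * (exp (-t) - ∑ k ∈ Finset.range (n + 1), (-t) ^ k / k !))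
        ((-1) ^ n * (exp (-x) - ∑ k ∈ Finset.range n, (-x) ^ k / k !)) x :=
      (((hasDerivAt_neg x).exp.fun_sub (hasDerivAt_sum_range_neg_pow_div_factorial n x)).const_mul
        ((-1 : ℝ) ^ (n + 1))).congr_deriv (by ring)
    have hmono := monotoneOn_Ici_of_hasDerivAt_nonneg hderiv fun x hx ↦ ih hx.le
    simpa [Finset.sum_range_succ'] using hmono self_mem_Ici ht ht

lemma integral_neg_sq_half_pow_div_factorial (k : ℕ) (a : ℝ) :
    ∫ x in (0 : ℝ)..a, (-(x ^ 2 / 2)) ^ k / k ! =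
      (-1) ^ k * a ^ (2 * k + 1) / (2 ^ k * k ! * (2 * k + 1)) := by
  have (x : ℝ) : (-(x ^ 2 / 2)) ^ k / k ! = (-1) ^ k / (2 ^ k * k !) * x ^ (2 * k) := by
    rw [pow_mul, neg_pow, div_pow]; ring
  simp_rw [this, intervalIntegral.integral_const_mul, integral_pow]
  rw [zero_pow (Nat.succ_ne_zero _), sub_zero]
  push_cast
  field_simp

theorem neg_one_pow_mul_integral_exp_neg_sq_half_sub_sum_nonneg (n : ℕ) {a : ℝ} (ha : 0 ≤ a) :
    0 ≤ (-1) ^ n * ((∫ x in (0 : ℝ)..a, exp (-x ^ 2 / 2)) -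
      ∑ k ∈ Finset.range n, (-1) ^ k * a ^ (2 * k + 1) / (2 ^ k * k ! * (2 * k + 1))) := by
  simp_rw [← integral_neg_sq_half_pow_div_factorial, neg_div]
  rw [← intervalIntegral.integral_finsetSum fun k _ ↦
      (by fun_prop : Continuous _).intervalIntegrable _ _,
    ← intervalIntegral.integral_sub ((by fun_prop : Continuous _).intervalIntegrable _ _)
      ((by fun_prop : Continuous _).intervalIntegrable _ _),
    ← intervalIntegral.integral_const_mul]
  exact intervalIntegral.integral_nonneg ha fun x _ ↦
    neg_one_pow_mul_exp_neg_sub_sum_nonneg n (by positivity)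

lemma continuous_stdPdf : Continuous stdPdf := by
  unfold stdPdf; fun_prop

lemma stdPdf_pos (x : ℝ) : 0 < stdPdf x := by
  unfold stdPdf; positivity

lemma stdPdf_neg (x : ℝ) : stdPdf (-x) = stdPdf x := by
  simp [stdPdf]

lemma integrable_stdPdf : Integrable stdPdf := by
  have := (integrable_exp_neg_mul_sq (b := 1 / 2) (by norm_num)).const_mul (√(2 * π))⁻¹
  convert this using 2 with x
  rw [stdPdf]; ring_nf

lemma stdCdf_zero : stdCdf 0 = 1 / 2 := by
  have hsqrt : √(2 * π) ≠ 0 := by positivity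
  calc stdCdf 0 = ∫ x in Ioi 0, stdPdf x := by
        rw [stdCdf]; simpa [stdPdf_neg] using integral_comp_neg_Iic 0 stdPdf
    _ = (√(2 * π))⁻¹ * ∫ x in Ioi 0, exp (-(1 / 2) * x ^ 2) := by
        rw [← integral_const_mul]; congr! 2 with x; rw [stdPdf]; ring_nf
    _ = 1 / 2 := by
        rw [integral_gaussian_Ioi, div_div_eq_mul_div, div_one, mul_comm π]
        field_simp

lemma stdCdf_eq_half_add_integral (x : ℝ) : stdCdf x = 1 / 2 + ∫ u in (0 : ℝ)..x, stdPdf u := by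
  rw [← intervalIntegral.integral_Iic_sub_Iic integrable_stdPdf.integrableOn
    integrable_stdPdf.integrableOn, ← stdCdf_zero, stdCdf, stdCdf]
  ring

lemma stdCdf_nonneg (x : ℝ) : 0 ≤ stdCdf x :=
  setIntegral_nonneg measurableSet_Iic fun y _ ↦ (stdPdf_pos y).le

lemma hasDerivAt_stdCdf (x : ℝ) : HasDerivAt stdCdf (stdPdf x) x := by
  have := intervalIntegral.integral_hasDerivAt_right (continuous_stdPdf.intervalIntegrable 0 x)
    (continuous_stdPdf.stronglyMeasurableAtFilter _ _) continuous_stdPdf.continuousAt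
  exact (this.const_add (1 / 2)).congr_of_eventuallyEq
    (Filter.Eventually.of_forall stdCdf_eq_half_add_integral)

lemma hasDerivAt_stdPdf (x : ℝ) : HasDerivAt stdPdf (-x * stdPdf x) x := by
  have := ((((hasDerivAt_pow 2 x).fun_neg).div_const 2).exp).const_mul (√(2 * π))⁻¹
  unfold stdPdf
  exact this.congr_deriv (by push_cast; ring)

noncomputable def stdNormalGap (a : ℝ) : ℝ := a ^ 3 * stdCdf a - (1 - a ^ 2) * stdPdf a

lemma hasDerivAt_stdNormalGap (a : ℝ) :
    HasDerivAt stdNormalGap (3 * a * (a * stdCdf a + stdPdf a)) a := by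
  have := ((hasDerivAt_pow 3 a).mul (hasDerivAt_stdCdf a)).sub
    (((hasDerivAt_pow 2 a).const_sub 1).mul (hasDerivAt_stdPdf a))
  exact this.congr_deriv (by push_cast; ring)

lemma continuous_stdNormalGap : Continuous stdNormalGap :=
  continuous_iff_continuousAt.mpr fun a ↦ (hasDerivAt_stdNormalGap a).continuousAt

lemma strictMonoOn_stdNormalGap : StrictMonoOn stdNormalGap (Ici 0) := by
  refine strictMonoOn_of_hasDerivWithinAt_pos (convex_Ici 0) continuous_stdNormalGap.continuousOn
    (fun a _ ↦ (hasDerivAt_stdNormalGap a).hasDerivWithinAt) fun a ha ↦ ?_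
  rw [interior_Ici, mem_Ioi] at ha
  have := stdPdf_pos a
  have := stdCdf_nonneg a
  positivity

lemma sqrt_two_pi_mul_stdNormalGap (a : ℝ) :
    √(2 * π) * stdNormalGap a =
      a ^ 3 * (√(2 * π) / 2 + ∫ x in (0 : ℝ)..a, exp (-x ^ 2 / 2)) -
        (1 - a ^ 2) * exp (-a ^ 2 / 2) := by
  have hsqrt : √(2 * π) ≠ 0 := by positivity
  simp only [stdNormalGap, stdCdf_eq_half_add_integral, stdPdf, intervalIntegral.integral_const_mul]
  field_simp

lemma lt_sqrt_two_pi : 2.506 < √(2 * π) :=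
  lt_sqrt_of_sq_lt (by linarith [pi_gt_d4])

lemma sqrt_two_pi_lt : √(2 * π) < 2.507 :=
  (sqrt_lt' (by norm_num)).mpr (by linarith [pi_lt_d4])

/-- Odd (even) `n` gives upper (lower) bounds in the two Taylor estimates. -/
lemma stdNormalGap_0_638_neg : stdNormalGap 0.638 < 0 := by
  have hI := neg_one_pow_mul_integral_exp_neg_sq_half_sub_sum_nonneg 3 (a := 0.638) (by norm_num)
  have hE := neg_one_pow_mul_exp_neg_sub_sum_nonneg 4 (t := 0.638 ^ 2 / 2) (by norm_num)
  have hs := sqrt_two_pi_lt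
  refine neg_of_mul_neg_right ?_ (sqrt_nonneg (2 * π))
  rw [sqrt_two_pi_mul_stdNormalGap, neg_div]
  generalize √(2 * π) = s at hs ⊢
  norm_num [Finset.sum_range_succ, Nat.factorial] at hI hE ⊢
  linarith

lemma stdNormalGap_0_639_pos : 0 < stdNormalGap 0.639 := by
  have hI := neg_one_pow_mul_integral_exp_neg_sq_half_sub_sum_nonneg 4 (a := 0.639) (by norm_num)
  have hE := neg_one_pow_mul_exp_neg_sub_sum_nonneg 5 (t := 0.639 ^ 2 / 2) (by norm_num)
  have hs := lt_sqrt_two_pi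
  refine pos_of_mul_pos_right ?_ (sqrt_nonneg (2 * π))
  rw [sqrt_two_pi_mul_stdNormalGap, neg_div]
  generalize √(2 * π) = s at hs ⊢
  norm_num [Finset.sum_range_succ, Nat.factorial] at hI hE ⊢
  linarith

theorem stmt5 :
    ∃ α : ℝ, α ∈ Set.Ioo (0.638 : ℝ) 0.639 ∧
      α ^ 3 * stdCdf α = (1 - α ^ 2) * stdPdf α ∧
      ∀ α' : ℝ, 0 < α' → α' ^ 3 * stdCdf α' = (1 - α' ^ 2) * stdPdf α' → α' = α := by
  obtain ⟨α, hα, hroot⟩ : ∃ α ∈ Ioo (0.638 : ℝ) 0.639, stdNormalGap α = 0 :=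
    intermediate_value_Ioo (by norm_num) continuous_stdNormalGap.continuousOn
      ⟨stdNormalGap_0_638_neg, stdNormalGap_0_639_pos⟩
  refine ⟨α, hα, sub_eq_zero.mp hroot, fun α' hα' hroot' ↦ ?_⟩
  have hα0 : 0 ≤ α := by linarith [hα.1]
  exact strictMonoOn_stdNormalGap.injOn hα'.le hα0 ((sub_eq_zero.mpr hroot').trans hroot.symm)
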